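/- Primal (dual maximization) representation: for every j = 0,...,J and any M ∈ M_D, the solution Y of the dynamic program satisfies Y_j = esssup_{r ∈ A_j} E_j[θ^{low}_j(r,M)] P-a.s., and the essential supremum is attained by any control r* ∈ A_j satisfying the optimality condition (r_i^*)^⊤ E_i[β_{i+1} Y_{i+1}] − F_i^{#}(r_i^*) = F_i(E_i[β_{i+1} Y_{i+1}]) P-a.s. for all i = j,...,J-1. -/

import Mathlib

open MeasureTheory
open scoped ENNReal

noncomputable section

variable {Ω : Type*} {m0 : MeasurableSpace Ω}

/-- `L^{∞-}`: membership in `L^p` for every finite `p ≥ 1`. -/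
def MemLinfMinus {E : Type*} [NormedAddCommGroup E] (μ : Measure Ω) (f : Ω → E) : Prop :=
  ∀ p : ℝ≥0∞, 1 ≤ p → p ≠ ⊤ → MemLp f p μ

/-- Euclidean dot product on `Fin D → ℝ`. -/
def dotp {D : ℕ} (x y : Fin D → ℝ) : ℝ := ∑ d, x d * y d

/-- Componentwise conditional expectation of an `ℝ^D`-valued random vector. -/
def cexpV (μ : Measure Ω) (m : MeasurableSpace Ω) {D : ℕ} (f : Ω → Fin D → ℝ) :
    Ω → Fin D → ℝ :=
  fun ω d => (μ[fun ω' => f ω' d|m]) ω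

/-- The `ℝ^D`-valued process `β_j Y_j` (vector weight times scalar process). -/
def bprod {D : ℕ} (β : ℕ → Ω → Fin D → ℝ) (Y : ℕ → Ω → ℝ) (j : ℕ) : Ω → Fin D → ℝ :=
  fun ω d => β j ω d * Y j ω

/-- Convex (Fenchel) conjugate, with values in `EReal`. -/
def econj {D : ℕ} (f : (Fin D → ℝ) → ℝ) (u : Fin D → ℝ) : EReal :=
  ⨆ z : Fin D → ℝ, ((dotp u z - f z : ℝ) : EReal)

/-- Real-valued version of the convex conjugate (meaningful where the conjugate is finite). -/
def rconj {D : ℕ} (f : (Fin D → ℝ) → ℝ) (u : Fin D → ℝ) : ℝ := (econj f u).toReal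

/-- The Doob martingale of an `ℝ^D`-valued process `Z`:
`j ↦ ∑_{i=0}^{j-1} (Z_{i+1} - E_i[Z_{i+1}])`. -/
def doobMart (μ : Measure Ω) (ℱ : Filtration ℕ m0) {D : ℕ} (Z : ℕ → Ω → Fin D → ℝ) :
    ℕ → Ω → Fin D → ℝ :=
  fun j ω d => ∑ i ∈ Finset.range j, (Z (i + 1) ω d - cexpV μ (ℱ i) (Z (i + 1)) ω d)

/-- Standing assumptions on the data `(F, β, ξ)` of the convex dynamic program:
measurability, adaptedness and convexity of the generator, polynomial growth with an
`L^{∞-}` coefficient, and integrability/adaptedness of the weights and terminal condition. -/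
structure Setting (μ : Measure Ω) (ℱ : Filtration ℕ m0) (J D : ℕ)
    (F : ℕ → Ω → (Fin D → ℝ) → ℝ) (β : ℕ → Ω → Fin D → ℝ) (ξ : Ω → ℝ) : Prop where
  F_meas : ∀ j < J, Measurable fun p : Ω × (Fin D → ℝ) => F j p.1 p.2
  F_adapted : ∀ j < J, ∀ z : Fin D → ℝ, StronglyMeasurable[ℱ j] fun ω => F j ω z
  F_convex : ∀ j < J, ∀ ω, ConvexOn ℝ Set.univ (F j ω)
  F_growth : ∃ q : ℝ, 0 ≤ q ∧ ∃ α : ℕ → Ω → ℝ,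
      (∀ j < J, StronglyMeasurable[ℱ j] (α j)) ∧
      (∀ j < J, ∀ᵐ ω ∂μ, 0 ≤ α j ω) ∧ (∀ j < J, MemLinfMinus μ (α j)) ∧
      ∀ j < J, ∀ z : Fin D → ℝ, ∀ᵐ ω ∂μ, |F j ω z| ≤ α j ω * (1 + ‖z‖ ^ q)
  β_adapted : ∀ j ≤ J, StronglyMeasurable[ℱ j] (β j)
  β_int : ∀ j ≤ J, MemLinfMinus μ (β j)
  ξ_meas : StronglyMeasurable[ℱ J] ξ
  ξ_int : MemLinfMinus μ ξ

/-- `Y` is an adapted `L^{∞-}` solution of the dynamic programming equation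
`Y_j = F_j(E_j[β_{j+1} Y_{j+1}])`, `Y_J = ξ`. -/
def IsSolution (μ : Measure Ω) (ℱ : Filtration ℕ m0) (J D : ℕ)
    (F : ℕ → Ω → (Fin D → ℝ) → ℝ) (β : ℕ → Ω → Fin D → ℝ) (ξ : Ω → ℝ)
    (Y : ℕ → Ω → ℝ) : Prop :=
  (∀ j ≤ J, StronglyMeasurable[ℱ j] (Y j) ∧ MemLinfMinus μ (Y j)) ∧
  (∀ᵐ ω ∂μ, Y J ω = ξ ω) ∧
  (∀ j < J, ∀ᵐ ω ∂μ, Y j ω = F j ω (cexpV μ (ℱ j) (bprod β Y (j + 1)) ω))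

/-- Supersolution of the dynamic program. -/
def IsSupersolution (μ : Measure Ω) (ℱ : Filtration ℕ m0) (J D : ℕ)
    (F : ℕ → Ω → (Fin D → ℝ) → ℝ) (β : ℕ → Ω → Fin D → ℝ) (ξ : Ω → ℝ)
    (Y : ℕ → Ω → ℝ) : Prop :=
  (∀ j ≤ J, StronglyMeasurable[ℱ j] (Y j) ∧ MemLinfMinus μ (Y j)) ∧
  (∀ᵐ ω ∂μ, ξ ω ≤ Y J ω) ∧
  (∀ j < J, ∀ᵐ ω ∂μ, F j ω (cexpV μ (ℱ j) (bprod β Y (j + 1)) ω) ≤ Y j ω)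

/-- Subsolution of the dynamic program. -/
def IsSubsolution (μ : Measure Ω) (ℱ : Filtration ℕ m0) (J D : ℕ)
    (F : ℕ → Ω → (Fin D → ℝ) → ℝ) (β : ℕ → Ω → Fin D → ℝ) (ξ : Ω → ℝ)
    (Y : ℕ → Ω → ℝ) : Prop :=
  (∀ j ≤ J, StronglyMeasurable[ℱ j] (Y j) ∧ MemLinfMinus μ (Y j)) ∧
  (∀ᵐ ω ∂μ, Y J ω ≤ ξ ω) ∧
  (∀ j < J, ∀ᵐ ω ∂μ, Y j ω ≤ F j ω (cexpV μ (ℱ j) (bprod β Y (j + 1)) ω))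

/-- The monotonicity assumption: `Y⁽¹⁾ ≥ Y⁽²⁾` a.s. implies
`F_j(β_{j+1} Y⁽¹⁾) ≥ F_j(β_{j+1} Y⁽²⁾)` a.s. -/
def MonoAssumption (μ : Measure Ω) (J D : ℕ)
    (F : ℕ → Ω → (Fin D → ℝ) → ℝ) (β : ℕ → Ω → Fin D → ℝ) : Prop :=
  ∀ j < J, ∀ Y1 Y2 : Ω → ℝ, MemLinfMinus μ Y1 → MemLinfMinus μ Y2 →
    (∀ᵐ ω ∂μ, Y2 ω ≤ Y1 ω) →
    ∀ᵐ ω ∂μ, F j ω (fun d => β (j + 1) ω d * Y2 ω) ≤ F j ω (fun d => β (j + 1) ω d * Y1 ω)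

/-- The class `M_D` of `ℝ^D`-valued `L^{∞-}` martingales. -/
def IsMartD (μ : Measure Ω) (ℱ : Filtration ℕ m0) {D : ℕ}
    (M : ℕ → Ω → Fin D → ℝ) : Prop :=
  Martingale M ℱ μ ∧ ∀ j, MemLinfMinus μ (M j)

/-- Admissible controls on the time indices `{j₀, ..., J-1}` (the class `A_{j₀}`). -/
def IsAdmissibleFrom (μ : Measure Ω) (ℱ : Filtration ℕ m0) (j₀ J D : ℕ)
    (F : ℕ → Ω → (Fin D → ℝ) → ℝ) (r : ℕ → Ω → Fin D → ℝ) : Prop :=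
  ∀ i, j₀ ≤ i → i < J →
    StronglyMeasurable[ℱ i] (r i) ∧ MemLinfMinus μ (r i) ∧
    (∀ᵐ ω ∂μ, econj (F i ω) (r i ω) ≠ ⊤) ∧
    MemLinfMinus μ (fun ω => rconj (F i ω) (r i ω))

/-- The lower pathwise recursion `θ^{low}(r, M)`:
`θ_J = ξ`, `θ_i = r_i^⊤ (β_{i+1} θ_{i+1}) - r_i^⊤ ΔM_{i+1} - F_i^{#}(r_i)`,
required on the time indices `{j₀, ..., J-1}`. -/
def IsThetaLowFrom (μ : Measure Ω) (j₀ J D : ℕ)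
    (F : ℕ → Ω → (Fin D → ℝ) → ℝ) (β : ℕ → Ω → Fin D → ℝ) (ξ : Ω → ℝ)
    (r M : ℕ → Ω → Fin D → ℝ) (θ : ℕ → Ω → ℝ) : Prop :=
  (∀ᵐ ω ∂μ, θ J ω = ξ ω) ∧
  ∀ i, j₀ ≤ i → i < J → ∀ᵐ ω ∂μ,
    θ i ω = dotp (r i ω) (fun d => β (i + 1) ω d * θ (i + 1) ω)
      - dotp (r i ω) (fun d => M (i + 1) ω d - M i ω d) - rconj (F i ω) (r i ω)

/-- The upper pathwise recursion `θ^{up}(M)`: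
`θ_J = ξ`, `θ_j = F_j(β_{j+1} θ_{j+1} - ΔM_{j+1})`. -/
def IsThetaUp (μ : Measure Ω) (J D : ℕ)
    (F : ℕ → Ω → (Fin D → ℝ) → ℝ) (β : ℕ → Ω → Fin D → ℝ) (ξ : Ω → ℝ)
    (M : ℕ → Ω → Fin D → ℝ) (θ : ℕ → Ω → ℝ) : Prop :=
  (∀ᵐ ω ∂μ, θ J ω = ξ ω) ∧
  ∀ j < J, ∀ᵐ ω ∂μ,
    θ j ω = F j ω (fun d => β (j + 1) ω d * θ (j + 1) ω - (M (j + 1) ω d - M j ω d))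

/-- The optimality condition `r_i^⊤ E_i[β_{i+1} Y_{i+1}] - F_i^{#}(r_i) = F_i(E_i[β_{i+1} Y_{i+1}])`
on the time indices `{j₀, ..., J-1}`. -/
def OptimalityCond (μ : Measure Ω) (ℱ : Filtration ℕ m0) (j₀ J D : ℕ)
    (F : ℕ → Ω → (Fin D → ℝ) → ℝ) (β : ℕ → Ω → Fin D → ℝ)
    (Y : ℕ → Ω → ℝ) (r : ℕ → Ω → Fin D → ℝ) : Prop :=
  ∀ i, j₀ ≤ i → i < J → ∀ᵐ ω ∂μ,
    dotp (r i ω) (cexpV μ (ℱ i) (bprod β Y (i + 1)) ω) - rconj (F i ω) (r i ω)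
      = F i ω (cexpV μ (ℱ i) (bprod β Y (i + 1)) ω)

/-!
Backward induction on `j`. As `r_j` is `ℱ_j`-measurable and `M` is a martingale,
`E_j[r_jᵀ ΔM_{j+1}] = 0`, so by the tower property and pulling out `r_jᵀ β_{j+1}`,
`E_j[θ_j] = E_j[(r_jᵀ β_{j+1}) E_{j+1}[θ_{j+1}]] - E_j[F_j^#(r_j)]`.
Monotonicity of the program together with finiteness of `F_j^#(r_j)` forces `r_jᵀ β_{j+1} ≥ 0`,
so the induction hypothesis `E_{j+1}[θ_{j+1}] ≤ Y_{j+1}` bounds this by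
`r_jᵀ E_j[β_{j+1} Y_{j+1}] - E_j[F_j^#(r_j)]`, which is at most
`F_j(E_j[β_{j+1} Y_{j+1}]) = Y_j` by the Fenchel–Young inequality.
The optimality condition is exactly equality in Fenchel–Young, and then every step is an equality.
-/

namespace MemLinfMinus

variable {μ : Measure Ω} {E F G : Type*} [NormedAddCommGroup E] [NormedAddCommGroup F]
  [NormedAddCommGroup G]

theorem integrable [IsFiniteMeasure μ] {f : Ω → E} (hf : MemLinfMinus μ f) : Integrable f μ :=
  memLp_one_iff_integrable.mp (hf 1 le_rfl ENNReal.one_ne_top)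

theorem congr_ae {f g : Ω → E} (hf : MemLinfMinus μ f) (hfg : f =ᵐ[μ] g) : MemLinfMinus μ g :=
  fun p hp hp' => (hf p hp hp').ae_eq hfg

theorem sub {f g : Ω → E} (hf : MemLinfMinus μ f) (hg : MemLinfMinus μ g) :
    MemLinfMinus μ (fun ω => f ω - g ω) :=
  fun p hp hp' => (hf p hp hp').sub (hg p hp hp')

variable [NormedSpace ℝ E] [NormedSpace ℝ F] [NormedSpace ℝ G]

theorem bilin (B : E →L[ℝ] F →L[ℝ] G) {f : Ω → E} {g : Ω → F} (hf : MemLinfMinus μ f)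
    (hg : MemLinfMinus μ g) : MemLinfMinus μ (fun ω => B (f ω) (g ω)) := by
  intro p hp hp'
  have h2p : 1 ≤ 2 * p := hp.trans (le_mul_of_one_le_left zero_le one_le_two)
  have h2p' : 2 * p ≠ ⊤ := ENNReal.mul_ne_top ENNReal.ofNat_ne_top hp'
  have : ENNReal.HolderTriple (2 * p) (2 * p) p :=
    ⟨by rw [ENNReal.mul_inv (by simp) (by simp), ← add_mul, ENNReal.inv_two_add_inv_two, one_mul]⟩
  exact (hf _ h2p h2p').of_bilin (fun x y => B x y) ‖B‖₊ (hg _ h2p h2p')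
    (B.continuous₂.comp_aestronglyMeasurable₂ (hf _ h2p h2p').1 (hg _ h2p h2p').1)
    (.of_forall fun ω => by rw [← NNReal.coe_le_coe]; exact B.le_opNorm₂ _ _)

end MemLinfMinus

theorem memLinfMinus_const {μ : Measure Ω} [IsFiniteMeasure μ] (c : ℝ) :
    MemLinfMinus μ (fun _ => c) :=
  fun _ _ _ => memLp_const c

section DotProduct

variable {D : ℕ}

def dotpCLM (D : ℕ) : (Fin D → ℝ) →L[ℝ] (Fin D → ℝ) →L[ℝ] ℝ :=
  ∑ d, (ContinuousLinearMap.mul ℝ ℝ).bilinearComp (.proj d) (.proj d)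

@[simp]
theorem dotpCLM_apply (u v : Fin D → ℝ) : dotpCLM D u v = dotp u v := by
  simp [dotpCLM, dotp]

theorem dotp_mul_right (u v : Fin D → ℝ) (c : ℝ) :
    dotp u (fun d => v d * c) = dotp u v * c := by
  simp only [dotp, Finset.sum_mul, mul_assoc]

theorem dotp_zero_right (u : Fin D → ℝ) : dotp u 0 = 0 := by
  simp [dotp]

theorem MemLinfMinus.dotp {μ : Measure Ω} {f g : Ω → Fin D → ℝ} (hf : MemLinfMinus μ f)
    (hg : MemLinfMinus μ g) : MemLinfMinus μ (fun ω => _root_.dotp (f ω) (g ω)) := by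
  simpa using hf.bilin (dotpCLM D) hg

theorem MemLinfMinus.mul {μ : Measure Ω} {f g : Ω → ℝ} (hf : MemLinfMinus μ f)
    (hg : MemLinfMinus μ g) : MemLinfMinus μ (fun ω => f ω * g ω) :=
  hf.bilin (ContinuousLinearMap.mul ℝ ℝ) hg

theorem MeasureTheory.StronglyMeasurable.dotp {m : MeasurableSpace Ω} {f g : Ω → Fin D → ℝ}
    (hf : StronglyMeasurable[m] f) (hg : StronglyMeasurable[m] g) :
    StronglyMeasurable[m] fun ω => _root_.dotp (f ω) (g ω) := by
  simpa using (dotpCLM D).continuous₂.comp_stronglyMeasurable (hf.prodMk hg)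

end DotProduct

section Conjugate

variable {D : ℕ} {f : (Fin D → ℝ) → ℝ} {u : Fin D → ℝ}

theorem dotp_sub_le_rconj (hu : econj f u ≠ ⊤) (z : Fin D → ℝ) : dotp u z - f z ≤ rconj f u := by
  have hz : ((dotp u z - f z : ℝ) : EReal) ≤ econj f u :=
    le_iSup (fun z => ((dotp u z - f z : ℝ) : EReal)) z
  exact (EReal.toReal_coe _).symm.trans_le (EReal.toReal_le_toReal hz (EReal.coe_ne_bot _) hu)

theorem dotp_nonneg_of_econj_ne_top (hu : econj f u ≠ ⊤) {b : Fin D → ℝ}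
    (hb : ∀ n : ℕ, f (fun d => b d * -n) ≤ f 0) : 0 ≤ dotp u b := by
  by_contra! hneg
  obtain ⟨n, hn⟩ := exists_lt_nsmul (neg_pos.mpr hneg) (rconj f u + f 0)
  have := dotp_sub_le_rconj hu (fun d => b d * -n)
  rw [dotp_mul_right, nsmul_eq_mul] at *
  linarith [hb n]

end Conjugate

section ConditionalExpectation

variable {μ : Measure Ω} {m : MeasurableSpace Ω} {D : ℕ}

theorem cexpV_ae_eq_condExp {f : Ω → Fin D → ℝ} (hf : Integrable f μ) :
    cexpV μ m f =ᵐ[μ] μ[f|m] := by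
  have h : ∀ d : Fin D, ∀ᵐ ω ∂μ, cexpV μ m f ω d = (μ[f|m]) ω d := fun d =>
    ((ContinuousLinearMap.proj d).comp_condExp_comm hf).symm
  filter_upwards [ae_all_iff.mpr h] with ω hω
  exact funext hω

theorem condExp_dotp_of_stronglyMeasurable_left {u g : Ω → Fin D → ℝ}
    (hu : StronglyMeasurable[m] u) (hug : Integrable (fun ω => dotp (u ω) (g ω)) μ)
    (hg : Integrable g μ) :
    μ[fun ω => dotp (u ω) (g ω)|m] =ᵐ[μ] fun ω => dotp (u ω) ((μ[g|m]) ω) := by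
  simpa using condExp_bilin_of_aestronglyMeasurable_left (dotpCLM D) hu.aestronglyMeasurable
    (by simpa using hug) hg

theorem condExp_sub_dotp_sub_of_condExp_eq_zero {A c : Ω → ℝ} {u Δ : Ω → Fin D → ℝ}
    (hu : StronglyMeasurable[m] u) (hA : Integrable A μ)
    (huΔ : Integrable (fun ω => dotp (u ω) (Δ ω)) μ) (hΔ : Integrable Δ μ) (hc : Integrable c μ)
    (hΔ0 : μ[Δ|m] =ᵐ[μ] 0) :
    μ[fun ω => A ω - dotp (u ω) (Δ ω) - c ω|m] =ᵐ[μ] μ[A|m] - μ[c|m] := by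
  filter_upwards [condExp_sub (hA.sub huΔ) hc m, condExp_sub hA huΔ m,
    condExp_dotp_of_stronglyMeasurable_left hu huΔ hΔ, hΔ0] with ω h1 h2 h3 h4
  rw [Pi.sub_apply, h2, Pi.sub_apply, h3, h4, Pi.zero_apply, dotp_zero_right, sub_zero] at h1
  exact h1

variable [IsFiniteMeasure μ]

theorem condExp_dotp_mul_ae_eq_dotp_cexpV {u : Ω → Fin D → ℝ} {b : ℕ → Ω → Fin D → ℝ}
    {y : ℕ → Ω → ℝ} {i : ℕ} (hu : StronglyMeasurable[m] u) (huL : MemLinfMinus μ u)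
    (hbL : MemLinfMinus μ (b i)) (hyL : MemLinfMinus μ (y i)) :
    μ[(fun ω => dotp (u ω) (b i ω)) * y i|m] =ᵐ[μ]
      fun ω => dotp (u ω) (cexpV μ m (bprod b y i) ω) := by
  have hbyL : MemLinfMinus μ (bprod b y i) := by
    unfold bprod
    simpa [Pi.smul_def, mul_comm] using hyL.bilin (ContinuousLinearMap.lsmul ℝ ℝ) hbL
  have hprod : (fun ω => dotp (u ω) (bprod b y i ω)) = (fun ω => dotp (u ω) (b i ω)) * y i :=
    funext fun ω => dotp_mul_right _ _ _
  have h := condExp_dotp_of_stronglyMeasurable_left hu (huL.dotp hbyL).integrable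
    hbyL.integrable
  rw [hprod] at h
  filter_upwards [h, cexpV_ae_eq_condExp (m := m) hbyL.integrable] with ω h1 h2
  rw [h1, h2]

theorem MeasureTheory.Martingale.condExp_sub_ae_eq_zero {E : Type*} [NormedAddCommGroup E]
    [NormedSpace ℝ E] [CompleteSpace E] {ℱ : Filtration ℕ m0} {M : ℕ → Ω → E}
    (hM : Martingale M ℱ μ) (i : ℕ) :
    μ[M (i + 1) - M i|ℱ i] =ᵐ[μ] 0 := by
  filter_upwards [condExp_sub (hM.integrable (i + 1)) (hM.integrable i) (ℱ i),
    hM.condExp_ae_eq (Nat.le_succ i)] with ω h1 h2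
  rw [h1, Pi.sub_apply, h2,
    condExp_of_stronglyMeasurable (ℱ.le i) (hM.stronglyAdapted i) (hM.integrable i), sub_self,
    Pi.zero_apply]

theorem condExp_mul_le_condExp_mul_of_condExp_le {m' : MeasurableSpace Ω} (hmm' : m ≤ m')
    (hm' : m' ≤ m0) {g Θ Z : Ω → ℝ} (hg : StronglyMeasurable[m'] g) (hg0 : 0 ≤ᵐ[μ] g)
    (hgΘ : Integrable (g * Θ) μ) (hΘ : Integrable Θ μ) (hgZ : Integrable (g * Z) μ)
    (hΘZ : μ[Θ|m'] ≤ᵐ[μ] Z) :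
    μ[g * Θ|m] ≤ᵐ[μ] μ[g * Z|m] := by
  refine (condExp_condExp_of_le hmm' hm').symm.le.trans
    (condExp_mono integrable_condExp hgZ ?_)
  filter_upwards [condExp_mul_of_stronglyMeasurable_left hg hgΘ hΘ, hg0, hΘZ] with ω h1 h2 h3
  rw [h1]
  exact mul_le_mul_of_nonneg_left h3 h2

theorem condExp_mul_eq_condExp_mul_of_condExp_eq {m' : MeasurableSpace Ω} (hmm' : m ≤ m')
    (hm' : m' ≤ m0) {g Θ Z : Ω → ℝ} (hg : StronglyMeasurable[m'] g)
    (hgΘ : Integrable (g * Θ) μ) (hΘ : Integrable Θ μ) (hΘZ : μ[Θ|m'] =ᵐ[μ] Z) :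
    μ[g * Θ|m] =ᵐ[μ] μ[g * Z|m] := by
  refine (condExp_condExp_of_le hmm' hm').symm.trans (condExp_congr_ae ?_)
  filter_upwards [condExp_mul_of_stronglyMeasurable_left hg hgΘ hΘ, hΘZ] with ω h1 h2
  rw [h1, Pi.mul_apply, Pi.mul_apply, h2]

end ConditionalExpectation

section DynamicProgram

variable {μ : Measure Ω} {ℱ : Filtration ℕ m0} {J D : ℕ}
  {F : ℕ → Ω → (Fin D → ℝ) → ℝ} {β : ℕ → Ω → Fin D → ℝ} {ξ : Ω → ℝ} {Y : ℕ → Ω → ℝ}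
  {M r : ℕ → Ω → Fin D → ℝ} {θ : ℕ → Ω → ℝ} {j k : ℕ}

theorem IsAdmissibleFrom.mono (hr : IsAdmissibleFrom μ ℱ j J D F r) (hjk : j ≤ k) :
    IsAdmissibleFrom μ ℱ k J D F r :=
  fun i hi hiJ => hr i (hjk.trans hi) hiJ

theorem IsThetaLowFrom.mono (hθ : IsThetaLowFrom μ j J D F β ξ r M θ) (hjk : j ≤ k) :
    IsThetaLowFrom μ k J D F β ξ r M θ :=
  ⟨hθ.1, fun i hi hiJ => hθ.2 i (hjk.trans hi) hiJ⟩

theorem OptimalityCond.mono (hopt : OptimalityCond μ ℱ j J D F β Y r) (hjk : j ≤ k) :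
    OptimalityCond μ ℱ k J D F β Y r :=
  fun i hi hiJ => hopt i (hjk.trans hi) hiJ

theorem MonoAssumption.dotp_nonneg [IsFiniteMeasure μ] (hmono : MonoAssumption μ J D F β)
    (hj : j < J) {u : Ω → Fin D → ℝ} (hu : ∀ᵐ ω ∂μ, econj (F j ω) (u ω) ≠ ⊤) :
    ∀ᵐ ω ∂μ, 0 ≤ dotp (u ω) (β (j + 1) ω) := by
  have hray : ∀ᵐ ω ∂μ, ∀ n : ℕ, F j ω (fun d => β (j + 1) ω d * -n) ≤ F j ω 0 :=
    ae_all_iff.mpr fun n => by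
      have := hmono j hj (fun _ => 0) (fun _ => -n) (memLinfMinus_const 0)
        (memLinfMinus_const _) (.of_forall fun _ => by simp)
      simp only [mul_zero] at this
      exact this
  filter_upwards [hray, hu] with ω h1 h2 using dotp_nonneg_of_econj_ne_top h2 h1

theorem IsThetaLowFrom.ae_eq_succ (hθ : IsThetaLowFrom μ j J D F β ξ r M θ) (hj : j < J) :
    θ j =ᵐ[μ] fun ω => dotp (r j ω) (β (j + 1) ω) * θ (j + 1) ω
      - dotp (r j ω) ((M (j + 1) - M j) ω) - rconj (F j ω) (r j ω) := by
  filter_upwards [hθ.2 j le_rfl hj] with ω hω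
  rw [hω, dotp_mul_right]
  rfl

theorem IsThetaLowFrom.memLinfMinus (hβ : ∀ i ≤ J, MemLinfMinus μ (β i))
    (hξ : MemLinfMinus μ ξ) (hM : ∀ i, MemLinfMinus μ (M i))
    (hr : IsAdmissibleFrom μ ℱ j J D F r) (hθ : IsThetaLowFrom μ j J D F β ξ r M θ)
    (hj : j ≤ J) : MemLinfMinus μ (θ j) := by
  induction hj using Nat.decreasingInduction with
  | self => exact hξ.congr_ae (Filter.EventuallyEq.symm hθ.1)
  | of_succ k hk ih =>
    obtain ⟨-, hrk, -, hconj⟩ := hr k le_rfl hk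
    have hθk := ih (hr.mono k.le_succ) (hθ.mono k.le_succ)
    exact ((((hrk.dotp (hβ (k + 1) hk)).mul hθk).sub (hrk.dotp ((hM _).sub (hM k)))).sub
      hconj).congr_ae (hθ.ae_eq_succ hk).symm

variable [IsFiniteMeasure μ]

theorem IsThetaLowFrom.condExp_ae_eq_succ (hM : IsMartD μ ℱ M)
    (hβ : MemLinfMinus μ (β (j + 1))) (hr : IsAdmissibleFrom μ ℱ j J D F r)
    (hθ : IsThetaLowFrom μ j J D F β ξ r M θ) (hθL : MemLinfMinus μ (θ (j + 1))) (hj : j < J) :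
    μ[θ j|ℱ j] =ᵐ[μ] μ[(fun ω => dotp (r j ω) (β (j + 1) ω)) * θ (j + 1)|ℱ j]
      - μ[fun ω => rconj (F j ω) (r j ω)|ℱ j] := by
  obtain ⟨hrm, hrL, -, hconj⟩ := hr j le_rfl hj
  have hΔL : MemLinfMinus μ (M (j + 1) - M j) := (hM.2 _).sub (hM.2 j)
  exact (condExp_congr_ae (hθ.ae_eq_succ hj)).trans
    (condExp_sub_dotp_sub_of_condExp_eq_zero hrm ((hrL.dotp hβ).mul hθL).integrable
      (hrL.dotp hΔL).integrable hΔL.integrable hconj.integrable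
      (hM.1.condExp_sub_ae_eq_zero j))

theorem IsThetaLowFrom.condExp_terminal (hset : Setting μ ℱ J D F β ξ)
    (hY : IsSolution μ ℱ J D F β ξ Y) (hθ : IsThetaLowFrom μ j J D F β ξ r M θ) :
    μ[θ J|ℱ J] =ᵐ[μ] Y J := by
  rw [← condExp_of_stronglyMeasurable (ℱ.le J) hset.ξ_meas hset.ξ_int.integrable] at hY
  exact (condExp_congr_ae hθ.1).trans (Filter.EventuallyEq.symm hY.2.1)

theorem IsSolution.sub_le_condExp_rconj (hY : IsSolution μ ℱ J D F β ξ Y)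
    (hβ : MemLinfMinus μ (β (j + 1))) (hr : IsAdmissibleFrom μ ℱ j J D F r) (hj : j < J) :
    μ[(fun ω => dotp (r j ω) (β (j + 1) ω)) * Y (j + 1)|ℱ j] - Y j ≤ᵐ[μ]
      μ[fun ω => rconj (F j ω) (r j ω)|ℱ j] := by
  obtain ⟨hrm, hrL, hfin, hconj⟩ := hr j le_rfl hj
  obtain ⟨hYm, hYL⟩ := hY.1 j hj.le
  rw [← condExp_of_stronglyMeasurable (ℱ.le j) (stronglyMeasurable_condExp.sub hYm)
    (integrable_condExp.sub hYL.integrable)]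
  refine condExp_mono (integrable_condExp.sub hYL.integrable) hconj.integrable ?_
  filter_upwards [condExp_dotp_mul_ae_eq_dotp_cexpV hrm hrL hβ (hY.1 (j + 1) hj).2,
    hY.2.2 j hj, hfin] with ω h1 h2 h3
  rw [Pi.sub_apply, h1, h2]
  exact dotp_sub_le_rconj h3 _

theorem IsSolution.condExp_rconj_eq_sub (hY : IsSolution μ ℱ J D F β ξ Y)
    (hβ : MemLinfMinus μ (β (j + 1))) (hr : IsAdmissibleFrom μ ℱ j J D F r)
    (hopt : OptimalityCond μ ℱ j J D F β Y r) (hj : j < J) :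
    μ[fun ω => rconj (F j ω) (r j ω)|ℱ j] =ᵐ[μ]
      μ[(fun ω => dotp (r j ω) (β (j + 1) ω)) * Y (j + 1)|ℱ j] - Y j := by
  obtain ⟨hrm, hrL, -, -⟩ := hr j le_rfl hj
  obtain ⟨hYm, hYL⟩ := hY.1 j hj.le
  rw [← condExp_of_stronglyMeasurable (ℱ.le j) (stronglyMeasurable_condExp.sub hYm)
    (integrable_condExp.sub hYL.integrable)]
  refine condExp_congr_ae ?_
  filter_upwards [condExp_dotp_mul_ae_eq_dotp_cexpV hrm hrL hβ (hY.1 (j + 1) hj).2,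
    hY.2.2 j hj, hopt j le_rfl hj] with ω h1 h2 h3
  rw [Pi.sub_apply, h1, h2]
  linarith

theorem IsThetaLowFrom.condExp_le (hset : Setting μ ℱ J D F β ξ)
    (hmono : MonoAssumption μ J D F β) (hY : IsSolution μ ℱ J D F β ξ Y) (hM : IsMartD μ ℱ M)
    (hr : IsAdmissibleFrom μ ℱ j J D F r) (hθ : IsThetaLowFrom μ j J D F β ξ r M θ)
    (hj : j ≤ J) : μ[θ j|ℱ j] ≤ᵐ[μ] Y j := by
  induction hj using Nat.decreasingInduction with
  | self => exact (hθ.condExp_terminal hset hY).le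
  | of_succ k hk ih =>
    obtain ⟨hrm, hrL, hfin, -⟩ := hr k le_rfl hk
    have hβL := hset.β_int (k + 1) hk
    have hθL := (hθ.mono k.le_succ).memLinfMinus hset.β_int hset.ξ_int hM.2
      (hr.mono k.le_succ) hk
    have hg := hrL.dotp hβL
    have hθY := condExp_mul_le_condExp_mul_of_condExp_le (ℱ.mono k.le_succ) (ℱ.le (k + 1))
      ((hrm.mono (ℱ.mono k.le_succ)).dotp (hset.β_adapted (k + 1) hk))
      (hmono.dotp_nonneg hk hfin) (hg.mul hθL).integrable hθL.integrable
      (hg.mul (hY.1 (k + 1) hk).2).integrable (ih (hr.mono k.le_succ) (hθ.mono k.le_succ))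
    filter_upwards [hθ.condExp_ae_eq_succ hM hβL hr hθL hk, hθY,
      hY.sub_le_condExp_rconj hβL hr hk] with ω h1 h2 h3
    simp only [Pi.sub_apply] at h1 h3
    linarith

theorem IsThetaLowFrom.condExp_eq (hset : Setting μ ℱ J D F β ξ)
    (hY : IsSolution μ ℱ J D F β ξ Y) (hM : IsMartD μ ℱ M)
    (hr : IsAdmissibleFrom μ ℱ j J D F r) (hopt : OptimalityCond μ ℱ j J D F β Y r)
    (hθ : IsThetaLowFrom μ j J D F β ξ r M θ) (hj : j ≤ J) : μ[θ j|ℱ j] =ᵐ[μ] Y j := by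
  induction hj using Nat.decreasingInduction with
  | self => exact hθ.condExp_terminal hset hY
  | of_succ k hk ih =>
    obtain ⟨hrm, hrL, -, -⟩ := hr k le_rfl hk
    have hβL := hset.β_int (k + 1) hk
    have hθL := (hθ.mono k.le_succ).memLinfMinus hset.β_int hset.ξ_int hM.2
      (hr.mono k.le_succ) hk
    have hθY := condExp_mul_eq_condExp_mul_of_condExp_eq (ℱ.mono k.le_succ) (ℱ.le (k + 1))
      ((hrm.mono (ℱ.mono k.le_succ)).dotp (hset.β_adapted (k + 1) hk))
      ((hrL.dotp hβL).mul hθL).integrable hθL.integrable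
      (ih (hr.mono k.le_succ) (hopt.mono k.le_succ) (hθ.mono k.le_succ))
    filter_upwards [hθ.condExp_ae_eq_succ hM hβL hr hθL hk, hθY,
      hY.condExp_rconj_eq_sub hβL hr hopt hk] with ω h1 h2 h3
    simp only [Pi.sub_apply] at h1 h3
    linarith

end DynamicProgram

/-- Primal representation: for every `j` and any `M ∈ M_D`, the solution `Y`
satisfies `Y_j = esssup_{r ∈ A_j} E_j[θ^{low}_j(r,M)]` `P`-a.s.: every admissible control `r`
gives `E_j[θ^{low}_j(r,M)] ≤ Y_j` a.s., and every control `r*` satisfying the optimality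
condition attains the essential supremum: `E_j[θ^{low}_j(r*,M)] = Y_j` a.s. -/
theorem primal_representation
    (μ : Measure Ω) [IsProbabilityMeasure μ] (ℱ : Filtration ℕ m0)
    (J D : ℕ) (F : ℕ → Ω → (Fin D → ℝ) → ℝ) (β : ℕ → Ω → Fin D → ℝ) (ξ : Ω → ℝ)
    (hset : Setting μ ℱ J D F β ξ) (hmono : MonoAssumption μ J D F β)
    (Y : ℕ → Ω → ℝ) (hY : IsSolution μ ℱ J D F β ξ Y)
    (M : ℕ → Ω → Fin D → ℝ) (hM : IsMartD μ ℱ M) :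
    ∀ j ≤ J,
      (∀ r : ℕ → Ω → Fin D → ℝ, ∀ θ : ℕ → Ω → ℝ,
        IsAdmissibleFrom μ ℱ j J D F r → IsThetaLowFrom μ j J D F β ξ r M θ →
        ∀ᵐ ω ∂μ, (μ[θ j|ℱ j]) ω ≤ Y j ω) ∧
      (∀ r : ℕ → Ω → Fin D → ℝ, ∀ θ : ℕ → Ω → ℝ,
        IsAdmissibleFrom μ ℱ j J D F r → OptimalityCond μ ℱ j J D F β Y r →
        IsThetaLowFrom μ j J D F β ξ r M θ →
        (μ[θ j|ℱ j]) =ᵐ[μ] Y j) :=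
  fun _ hj => ⟨fun _ _ hr hθ => hθ.condExp_le hset hmono hY hM hr hj,
    fun _ _ hr hopt hθ => hθ.condExp_eq hset hY hM hr hopt hj⟩

end
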